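/- arXiv:2209.13817 — 11 statements merged into one kernel-verified Lean document; each statement's English description precedes it below -/
import Mathlib

section
/- The polynomial x^2 + x^3 with natural number coefficients cannot be written as a product of two non-monomial polynomials in ℕ[x], i.e., if x^2 + x^3 = g * h with g, h ∈ ℕ[x], then g or h is a monomial. -/
/-!
Over a semiring without cancellation such as `ℕ`, nothing in a product can cancel, so the support
of `g * h` contains the sumset `supp g + supp h`. By Cauchy–Davenport in `ℕ` that sumset has at
least `#supp g + #supp h - 1` elements, which is at least `3` when neither factor is a monomial,
whereas `x^2 + x^3` has only two terms.
-/

open Polynomial Finset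
open scoped Pointwise

namespace Polynomial

variable {R : Type*} [Semiring R] [PartialOrder R] [CanonicallyOrderedAdd R] [NoZeroDivisors R]

theorem coeff_mul_ne_zero {p q : R[X]} {i j : ℕ} (hp : p.coeff i ≠ 0) (hq : q.coeff j ≠ 0) :
    (p * q).coeff (i + j) ≠ 0 := by
  rw [coeff_mul, Ne, Finset.sum_eq_zero_iff, not_forall]
  exact ⟨(i, j), by simp [hp, hq]⟩

theorem support_add_support_subset_support_mul (p q : R[X]) :
    p.support + q.support ⊆ (p * q).support := by
  intro n hn
  obtain ⟨i, hi, j, hj, rfl⟩ := mem_add.1 hn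
  exact mem_support_iff.2 (coeff_mul_ne_zero (mem_support_iff.1 hi) (mem_support_iff.1 hj))

theorem card_support_add_card_support_sub_one_le {p q : R[X]} (hp : p ≠ 0) (hq : q ≠ 0) :
    #p.support + #q.support - 1 ≤ #(p * q).support :=
  (cauchy_davenport_add_of_linearOrder_isCancelAdd (support_nonempty.2 hp)
    (support_nonempty.2 hq)).trans (card_le_card (support_add_support_subset_support_mul p q))

end Polynomial

/-- The polynomial `x^2 + x^3 ∈ ℕ[x]` is monolithic: in any factorization
`x^2 + x^3 = g * h` in `ℕ[x]`, one of the factors is a monomial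
(a polynomial whose support has cardinality one). -/
theorem x_sq_add_x_cube_monolithic :
    ∀ g h : Polynomial ℕ, (X ^ 2 + X ^ 3 : Polynomial ℕ) = g * h →
      g.support.card = 1 ∨ h.support.card = 1 := by
  intro g h hgh
  have hcard : #(g * h).support = 2 := by
    simpa [← hgh] using card_support_binomial (R := ℕ) (k := 2) (m := 3) (by norm_num)
      one_ne_zero one_ne_zero
  have hg : g ≠ 0 := by rintro rfl; simp at hcard
  have hh : h ≠ 0 := by rintro rfl; simp at hcard
  have hsumset := card_support_add_card_support_sub_one_le hg hh
  have hg_pos := card_pos.2 (support_nonempty.2 hg)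
  have hh_pos := card_pos.2 (support_nonempty.2 hh)
  omega
end

section
/- If f, g are nonzero polynomials with natural number coefficients, then the cardinality of the support of f·g is at least |supp(f)| + |supp(g)| − 1. -/
open scoped Pointwise

open Polynomial

/-! The coefficient of `x^(a+b)` in `f * g` is a sum of nonnegative terms, one of which is
`f_a g_b`, so `supp f + supp g ⊆ supp (f * g)`; the bound is then the Cauchy–Davenport
inequality `|A + B| ≥ |A| + |B| - 1` for finite subsets of a linearly ordered cancellative
monoid. -/

theorem Polynomial.support_add_support_subset_support_mul_s2 {R : Type*} [Semiring R]
    [PartialOrder R] [CanonicallyOrderedAdd R] [NoZeroDivisors R] (f g : R[X]) :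
    f.support + g.support ⊆ (f * g).support := by
  intro n hn
  obtain ⟨a, ha, b, hb, rfl⟩ := Finset.mem_add.1 hn
  rw [mem_support_iff] at ha hb ⊢
  rw [coeff_mul, Ne, Finset.sum_eq_zero_iff, not_forall]
  exact ⟨(a, b), fun h ↦
    mul_ne_zero ha hb (h (Finset.HasAntidiagonal.mem_antidiagonal.2 rfl))⟩

/-- For nonzero `f, g ∈ ℕ[x]`, one has `|supp(f·g)| ≥ |supp f| + |supp g| - 1`. -/
theorem support_card_mul_ge :
    ∀ f g : Polynomial ℕ, f ≠ 0 → g ≠ 0 →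
      f.support.card + g.support.card - 1 ≤ (f * g).support.card := by
  intro f g hf hg
  calc f.support.card + g.support.card - 1
      ≤ (f.support + g.support).card :=
        cauchy_davenport_add_of_linearOrder_isCancelAdd (support_nonempty.2 hf)
          (support_nonempty.2 hg)
    _ ≤ (f * g).support.card :=
        Finset.card_le_card (support_add_support_subset_support_mul_s2 f g)
end

section
/- The multiplicative monoid of nonzero polynomials with natural number coefficients is a bounded factorization monoid: the map ℓ(f) = (number of prime factors with multiplicity of the leading coefficient of f) + deg(f) + |supp(f)| − 1 is a length function, i.e., ℓ(f) = 0 iff f is a unit, and ℓ(f·g) ≥ ℓ(f) + ℓ(g). -/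
/-!
Each summand of `ℓ` behaves well under multiplication: `Ω` and the degree are additive on
nonzero elements, and since coefficients in `ℕ` cannot cancel, `supp (f g)` contains the sumset
`supp f + supp g`, which by Cauchy–Davenport for the linearly ordered cancellative monoid `ℕ`
has at least `|supp f| + |supp g| - 1` elements. Hence `ℓ` is superadditive. If `ℓ f = 0` then
`f` is a constant with no prime factors, i.e. `f = 1`, the only unit of `ℕ[x]`.
-/

open Polynomial

/-- The length function on nonzero elements of `ℕ[x]`:
`ℓ(f) = Ω(c(f)) + deg f + |supp f| - 1`, where `Ω(c(f))` is the number of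
prime factors (with multiplicity) of the leading coefficient of `f`. -/
noncomputable def polyLength (f : Polynomial ℕ) : ℕ :=
  (Nat.primeFactorsList f.leadingCoeff).length + f.natDegree + f.support.card - 1

open Finset Pointwise ArithmeticFunction ArithmeticFunction.Omega

namespace Polynomial

section CanonicallyOrdered

variable {R : Type*} [Semiring R] [NoZeroDivisors R] [PartialOrder R] [CanonicallyOrderedAdd R]

theorem support_add_support_subset_support_mul_s5 (f g : R[X]) :
    f.support + g.support ⊆ (f * g).support := by
  intro k hk
  obtain ⟨i, hi, j, hj, rfl⟩ := mem_add.1 hk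
  rw [mem_support_iff] at hi hj ⊢
  rw [coeff_mul, Ne, sum_eq_zero_iff, not_forall]
  exact ⟨(i, j), by simpa using mul_ne_zero hi hj⟩

theorem card_support_add_card_support_le_card_support_mul_add_one {f g : R[X]}
    (hf : f ≠ 0) (hg : g ≠ 0) : #f.support + #g.support ≤ #(f * g).support + 1 :=
  calc #f.support + #g.support
      ≤ #(f.support + g.support) + 1 := by
        have := cauchy_davenport_add_of_linearOrder_isCancelAdd
          (support_nonempty.2 hf) (support_nonempty.2 hg)
        omega
    _ ≤ #(f * g).support + 1 := by
        gcongr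
        exact support_add_support_subset_support_mul_s5 f g

end CanonicallyOrdered

instance subsingleton_units {R : Type*} [Semiring R] [NoZeroDivisors R] [Subsingleton Rˣ] :
    Subsingleton R[X]ˣ :=
  Subsingleton.units_of_isUnit fun p hp => by
    obtain ⟨r, hr, rfl⟩ := isUnit_iff.1 hp
    rw [hr.eq_one, map_one]

end Polynomial

theorem polyLength_eq {f : ℕ[X]} (hf : f ≠ 0) :
    polyLength f = Ω f.leadingCoeff + f.natDegree + (#f.support - 1) := by
  have : 0 < #f.support := card_pos.2 (support_nonempty.2 hf)
  rw [polyLength, cardFactors_apply]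
  omega

theorem polyLength_eq_zero_iff {f : ℕ[X]} (hf : f ≠ 0) : polyLength f = 0 ↔ f = 1 := by
  constructor
  · intro h
    rw [polyLength_eq hf] at h
    have hdeg : f.natDegree = 0 := by omega
    have hΩ : Ω f.leadingCoeff = 0 := by omega
    have hlc : f.leadingCoeff = 1 :=
      (cardFactors_eq_zero_iff_eq_zero_or_one.1 hΩ).resolve_left (leadingCoeff_ne_zero.2 hf)
    rw [eq_C_of_natDegree_eq_zero hdeg, ← hdeg, ← leadingCoeff, hlc, map_one]
  · rintro rfl
    rw [polyLength, ← C_1, support_C one_ne_zero]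
    simp

theorem polyLength_add_polyLength_le_polyLength_mul {f g : ℕ[X]} (hf : f ≠ 0) (hg : g ≠ 0) :
    polyLength f + polyLength g ≤ polyLength (f * g) := by
  have hΩ : Ω (f * g).leadingCoeff = Ω f.leadingCoeff + Ω g.leadingCoeff := by
    rw [leadingCoeff_mul, cardFactors_mul (leadingCoeff_ne_zero.2 hf) (leadingCoeff_ne_zero.2 hg)]
  have hcard := card_support_add_card_support_le_card_support_mul_add_one hf hg
  have hf₀ : 0 < #f.support := card_pos.2 (support_nonempty.2 hf)
  have hg₀ : 0 < #g.support := card_pos.2 (support_nonempty.2 hg)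
  rw [polyLength_eq hf, polyLength_eq hg, polyLength_eq (mul_ne_zero hf hg), hΩ, natDegree_mul hf hg]
  omega

/-- `ℓ` is a length function on the multiplicative monoid of nonzero polynomials
of `ℕ[x]`: `ℓ f = 0` iff `f` is a unit, and `ℓ` is superadditive; hence `ℕ[x]*`
is a bounded factorization monoid. -/
theorem polyLength_is_length_function :
    (∀ f : Polynomial ℕ, f ≠ 0 → (polyLength f = 0 ↔ IsUnit f)) ∧
    (∀ f g : Polynomial ℕ, f ≠ 0 → g ≠ 0 →
      polyLength f + polyLength g ≤ polyLength (f * g)) :=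
  ⟨fun _ hf => by rw [polyLength_eq_zero_iff hf, isUnit_iff_eq_one],
    fun _ _ => polyLength_add_polyLength_le_polyLength_mul⟩
end

section
/- A commutative cancellative monoid M is a bounded factorization monoid if and only if there exists a length function ℓ: M → ℕ (ℓ(u) = 0 iff u is a unit, and ℓ(bc) ≥ ℓ(b) + ℓ(c) for all b, c). -/
/-- A commutative cancellative monoid is a bounded factorization monoid:
every element admits a bound on the cardinalities of multisets of nonunits
whose product is that element. -/
def IsBFM (M : Type*) [CancelCommMonoid M] : Prop :=
  ∀ b : M, ∃ N : ℕ, ∀ z : Multiset M, (∀ x ∈ z, ¬ IsUnit x) → z.prod = b → z.card ≤ N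

/-!
A superadditive `ℓ` that is positive on nonunits bounds the number of nonunit factors of `b` by
`ℓ b`. Conversely, in a BFM take `ℓ b` to be the longest factorization of `b` into nonunits.
Counting factorizations only up to associates makes `0` a length of every unit, so the lengths of
`b` and `c` always concatenate to a length of `b * c`; a unit factor can be absorbed into any
nonunit factor, so this does not enlarge the set of lengths of a nonunit.
-/

section CommMonoid

variable {M : Type*} [CommMonoid M]

theorem Multiset.card_le_of_superadditive {ℓ : M → ℕ} (hℓ : ∀ b c, ℓ b + ℓ c ≤ ℓ (b * c))
    {z : Multiset M} (hz : ∀ x ∈ z, 0 < ℓ x) : z.card ≤ ℓ z.prod := by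
  induction z using Multiset.induction with
  | empty => simp
  | cons x z ih =>
    have hx := hz x (Multiset.mem_cons_self x z)
    have hzl := ih fun y hy => hz y (Multiset.mem_cons_of_mem hy)
    calc (x ::ₘ z).card = z.card + 1 := Multiset.card_cons x z
      _ ≤ ℓ x + ℓ z.prod := by omega
      _ ≤ ℓ (x ::ₘ z).prod := by rw [Multiset.prod_cons]; exact hℓ x z.prod

theorem Multiset.exists_nonunits_prod_eq_of_associated {z : Multiset M}
    (hz : ∀ x ∈ z, ¬IsUnit x) (hne : z ≠ 0) {b : M} (hzb : Associated z.prod b) :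
    ∃ w : Multiset M, (∀ x ∈ w, ¬IsUnit x) ∧ w.prod = b ∧ w.card = z.card := by
  obtain ⟨u, rfl⟩ := hzb
  obtain ⟨x, hx⟩ := Multiset.exists_mem_of_ne_zero hne
  obtain ⟨z', rfl⟩ := Multiset.exists_cons_of_mem hx
  refine ⟨(x * u) ::ₘ z', ?_, ?_, by simp⟩
  · intro y hy
    rcases Multiset.mem_cons.mp hy with rfl | hy
    · rw [Units.isUnit_mul_units]
      exact hz x hx
    · exact hz y (Multiset.mem_cons_of_mem hy)
  · simp only [Multiset.prod_cons]
    exact mul_right_comm _ _ _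

def nonunitFactorizationLengths (b : M) : Set ℕ :=
  {n | ∃ z : Multiset M, (∀ x ∈ z, ¬IsUnit x) ∧ Associated z.prod b ∧ z.card = n}

theorem zero_mem_nonunitFactorizationLengths {b : M} (hb : IsUnit b) :
    0 ∈ nonunitFactorizationLengths b :=
  ⟨0, by simp, by simpa using (associated_one_iff_isUnit.mpr hb).symm, rfl⟩

theorem one_mem_nonunitFactorizationLengths {b : M} (hb : ¬IsUnit b) :
    1 ∈ nonunitFactorizationLengths b :=
  ⟨{b}, by simpa using hb, by simp, by simp⟩

theorem nonunitFactorizationLengths_nonempty (b : M) :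
    (nonunitFactorizationLengths b).Nonempty := by
  by_cases hb : IsUnit b
  · exact ⟨0, zero_mem_nonunitFactorizationLengths hb⟩
  · exact ⟨1, one_mem_nonunitFactorizationLengths hb⟩

theorem eq_zero_of_mem_nonunitFactorizationLengths {b : M} (hb : IsUnit b) {n : ℕ}
    (hn : n ∈ nonunitFactorizationLengths b) : n = 0 := by
  obtain ⟨z, hz, hzb, rfl⟩ := hn
  have : z = 0 := Multiset.eq_zero_of_forall_notMem fun x hx =>
    hz x hx (isUnit_of_dvd_unit ((Multiset.dvd_prod hx).trans hzb.dvd) hb)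
  simp [this]

theorem add_mem_nonunitFactorizationLengths_mul {b c : M} {m n : ℕ}
    (hm : m ∈ nonunitFactorizationLengths b) (hn : n ∈ nonunitFactorizationLengths c) :
    m + n ∈ nonunitFactorizationLengths (b * c) := by
  obtain ⟨z, hz, hzb, rfl⟩ := hm
  obtain ⟨w, hw, hwc, rfl⟩ := hn
  refine ⟨z + w, ?_, by simpa using hzb.mul_mul hwc, Multiset.card_add z w⟩
  intro x hx
  rcases Multiset.mem_add.mp hx with hx | hx
  exacts [hz x hx, hw x hx]

noncomputable def maxNonunitFactorizationLength (b : M) : ℕ :=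
  sSup (nonunitFactorizationLengths b)

end CommMonoid

section CancelCommMonoid

variable {M : Type*} [CancelCommMonoid M]

theorem IsBFM.bddAbove_nonunitFactorizationLengths (hM : IsBFM M) (b : M) :
    BddAbove (nonunitFactorizationLengths b) := by
  obtain ⟨N, hN⟩ := hM b
  refine ⟨N, ?_⟩
  rintro _ ⟨z, hz, hzb, rfl⟩
  rcases eq_or_ne z 0 with rfl | hne
  · simp
  · obtain ⟨w, hw, hwb, hwz⟩ := Multiset.exists_nonunits_prod_eq_of_associated hz hne hzb
    exact hwz ▸ hN w hw hwb

theorem IsBFM.maxNonunitFactorizationLength_mem (hM : IsBFM M) (b : M) :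
    maxNonunitFactorizationLength b ∈ nonunitFactorizationLengths b :=
  Nat.sSup_mem (nonunitFactorizationLengths_nonempty b) (hM.bddAbove_nonunitFactorizationLengths b)

theorem IsBFM.maxNonunitFactorizationLength_eq_zero_iff (hM : IsBFM M) (u : M) :
    maxNonunitFactorizationLength u = 0 ↔ IsUnit u := by
  refine ⟨fun h0 => ?_, fun hu =>
    eq_zero_of_mem_nonunitFactorizationLengths hu (hM.maxNonunitFactorizationLength_mem u)⟩
  by_contra hu
  have := le_csSup (hM.bddAbove_nonunitFactorizationLengths u)
    (one_mem_nonunitFactorizationLengths hu)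
  exact Nat.one_le_iff_ne_zero.mp this h0

theorem IsBFM.maxNonunitFactorizationLength_add_le_mul (hM : IsBFM M) (b c : M) :
    maxNonunitFactorizationLength b + maxNonunitFactorizationLength c ≤
      maxNonunitFactorizationLength (b * c) :=
  le_csSup (hM.bddAbove_nonunitFactorizationLengths (b * c))
    (add_mem_nonunitFactorizationLengths_mul (hM.maxNonunitFactorizationLength_mem b)
      (hM.maxNonunitFactorizationLength_mem c))

end CancelCommMonoid

/-- A commutative cancellative monoid `M` is a bounded factorization monoid if
and only if there exists a length function `ℓ : M → ℕ`, i.e. `ℓ u = 0` iff `u`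
is a unit and `ℓ (b*c) ≥ ℓ b + ℓ c` for all `b, c`. -/
theorem bfm_iff_exists_length_function (M : Type*) [CancelCommMonoid M] :
    IsBFM M ↔ ∃ ℓ : M → ℕ,
      (∀ u : M, ℓ u = 0 ↔ IsUnit u) ∧ ∀ b c : M, ℓ b + ℓ c ≤ ℓ (b * c) := by
  constructor
  · exact fun hM => ⟨maxNonunitFactorizationLength, hM.maxNonunitFactorizationLength_eq_zero_iff,
      hM.maxNonunitFactorizationLength_add_le_mul⟩
  · rintro ⟨ℓ, hℓ_zero, hℓ_add⟩ b
    refine ⟨ℓ b, fun z hz hzb => hzb ▸ Multiset.card_le_of_superadditive hℓ_add fun x hx => ?_⟩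
    exact Nat.pos_of_ne_zero fun h => hz x hx ((hℓ_zero x).mp h)
end

section
/- For every natural number m ≥ 1, the binomial x^m + 1 is irreducible in the multiplicative monoid of nonzero polynomials with natural number coefficients: if x^m + 1 = g·h with g, h ∈ ℕ[x], then g = 1 or h = 1. -/
/-!
Coefficients in `ℕ` cannot cancel, so in `x ^ m + 1 = g * h` every product `gᵢ hⱼ` is at most
the coefficient of `x ^ (i + j)`. The constant coefficients multiply to `1`, so both are `1`,
and then each of `g`, `h` is coefficientwise below `x ^ m + 1`. The vanishing coefficient of
`x ^ (2 m)` gives `gₘ hₘ = 0`, and the factor whose `m`-th coefficient vanishes is `1`.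
-/

open Polynomial

namespace Polynomial

theorem coeff_mul_coeff_le_coeff_mul {R : Type*} [Semiring R] [PartialOrder R]
    [IsOrderedAddMonoid R] [CanonicallyOrderedAdd R] (p q : R[X]) (i j : ℕ) :
    p.coeff i * q.coeff j ≤ (p * q).coeff (i + j) := by
  rw [coeff_mul]
  exact Finset.single_le_sum (f := fun x : ℕ × ℕ ↦ p.coeff x.1 * q.coeff x.2) (a := (i, j))
    (fun _ _ ↦ zero_le) (Finset.HasAntidiagonal.mem_antidiagonal.mpr rfl)

theorem eq_one_of_mul_eq_X_pow_add_one {m : ℕ} {p q : ℕ[X]} (hpq : X ^ m + 1 = p * q)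
    (hp₀ : p.coeff 0 = 1) (hq₀ : q.coeff 0 = 1) (hpm : p.coeff m = 0) : p = 1 := by
  ext k
  rcases eq_or_ne k 0 with rfl | hk
  · simpa using hp₀
  have hle : p.coeff k ≤ (X ^ m + 1 : ℕ[X]).coeff k := by
    simpa [hpq, hq₀] using coeff_mul_coeff_le_coeff_mul p q k 0
  rcases eq_or_ne k m with rfl | hkm
  · simpa [coeff_one, hk] using hpm
  · simpa [coeff_X_pow, coeff_one, hk, hkm] using hle

end Polynomial

/-- For every `m ≥ 1`, the binomial `x^m + 1` is irreducible in the
multiplicative monoid of nonzero polynomials of `ℕ[x]`: any factorization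
`x^m + 1 = g * h` in `ℕ[x]` forces `g = 1` or `h = 1`. -/
theorem xPow_add_one_irreducible :
    ∀ m : ℕ, 1 ≤ m → ∀ g h : Polynomial ℕ,
      (X ^ m + 1 : Polynomial ℕ) = g * h → g = 1 ∨ h = 1 := by
  intro m hm g h hgh
  have hm₀ : m ≠ 0 := by omega
  obtain ⟨hg₀, hh₀⟩ : g.coeff 0 = 1 ∧ h.coeff 0 = 1 := by
    refine mul_eq_one.mp ?_
    simpa [mul_coeff_zero, coeff_X_pow, hm₀.symm] using (congrArg (coeff · 0) hgh).symm
  have hgmhm : g.coeff m * h.coeff m = 0 := by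
    refine Nat.le_zero.mp ?_
    simpa [← hgh, coeff_X_pow, coeff_one, hm₀] using coeff_mul_coeff_le_coeff_mul g h m m
  rcases Nat.mul_eq_zero.mp hgmhm with hgm | hhm
  · exact .inl (eq_one_of_mul_eq_X_pow_add_one hgh hg₀ hh₀ hgm)
  · exact .inr (eq_one_of_mul_eq_X_pow_add_one (hgh.trans (mul_comm g h)) hh₀ hg₀ hhm)
end

section
/- The polynomial x^6 + x^5 + x^3 + 1 is irreducible in ℕ[x]: it cannot be written as a product of two nonunit polynomials with natural number coefficients. -/
/-!
Since the only unit of `ℕ` is `1`, both factors of the monic polynomial `f = x^6 + x^5 + x^3 + 1`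
are monic with constant term `1`. As coefficients in `ℕ` cannot cancel, the coefficient of `x^n`
(`n ≠ 0`) in `g * h` is at least `g_n + h_n`; taking `n` to be the degree of a factor shows that
`f` has a coefficient `≥ 1` at each factor's degree, and `≥ 2` if the degrees coincide. The
coefficients `0, 0, 1` of `x, x^2, x^3` in `f` leave only the degrees `0` and `6`.
-/

open Polynomial

namespace Polynomial

open Finset

theorem monic_mul_iff_of_subsingleton_units {R : Type*} [CommSemiring R] [NoZeroDivisors R]
    [Subsingleton Rˣ] {g h : R[X]} : (g * h).Monic ↔ g.Monic ∧ h.Monic :=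
  ⟨fun hgh => mul_eq_one.mp (leadingCoeff_mul g h ▸ hgh), fun ⟨hg, hh⟩ => hg.mul hh⟩

theorem coeff_add_coeff_le_coeff_mul {R : Type*} [CommSemiring R] [PartialOrder R]
    [CanonicallyOrderedAdd R] {g h : R[X]} (hg : g.coeff 0 = 1) (hh : h.coeff 0 = 1) {n : ℕ}
    (hn : n ≠ 0) : g.coeff n + h.coeff n ≤ (g * h).coeff n := by
  have hsub : ({(0, n), (n, 0)} : Finset (ℕ × ℕ)) ⊆ antidiagonal n := by
    simp [Finset.insert_subset_iff]
  calc g.coeff n + h.coeff n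
      = ∑ x ∈ {(0, n), (n, 0)}, g.coeff x.1 * h.coeff x.2 := by
        rw [Finset.sum_pair (by simp [hn.symm])]
        simp [hg, hh, add_comm]
    _ ≤ (g * h).coeff n := coeff_mul g h n ▸ Finset.sum_le_sum_of_subset hsub

end Polynomial

/-- The polynomial `x^6 + x^5 + x^3 + 1` is irreducible in `ℕ[x]`: in any
factorization into two polynomials with natural number coefficients, one factor
is a unit. -/
theorem f2_irreducible :
    ∀ g h : Polynomial ℕ, (X ^ 6 + X ^ 5 + X ^ 3 + 1 : Polynomial ℕ) = g * h →
      IsUnit g ∨ IsUnit h := by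
  intro g h hf
  obtain ⟨hg, hh⟩ := monic_mul_iff_of_subsingleton_units.mp (hf ▸ by monicity! : (g * h).Monic)
  obtain ⟨hg0, hh0⟩ : g.coeff 0 = 1 ∧ h.coeff 0 = 1 :=
    mul_eq_one.mp (by rw [← mul_coeff_zero, ← hf]; simp)
  have hdeg : g.natDegree + h.natDegree = 6 := by
    rw [← hg.natDegree_mul hh, ← hf]; compute_degree!
  by_cases hg_deg : g.natDegree = 0
  · exact .inl (eq_one_of_monic_natDegree_zero hg hg_deg ▸ isUnit_one)
  by_cases hh_deg : h.natDegree = 0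
  · exact .inr (eq_one_of_monic_natDegree_zero hh hh_deg ▸ isUnit_one)
  have hg_lead := hf ▸ coeff_add_coeff_le_coeff_mul hg0 hh0 hg_deg
  have hh_lead := hf ▸ coeff_add_coeff_le_coeff_mul hg0 hh0 hh_deg
  have hg1 := hg.coeff_natDegree
  have hh1 := hh.coeff_natDegree
  have hh_eq : h.natDegree = 6 - g.natDegree := by omega
  rw [hh_eq] at hh_lead hh1
  have hg_pos : 0 < g.natDegree := Nat.pos_of_ne_zero hg_deg
  have hg_lt : g.natDegree < 6 := by omega
  interval_cases g.natDegree <;> simp [coeff_X_pow, coeff_one] at hg_lead hh_lead hh1 <;> omega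
end

section
/- ℕ[x] is not a half-factorial monoid: the polynomial x^{10} + x^9 + x^8 + 3x^7 + 2x^6 + 2x^5 + 2x^4 + x^3 + x^2 + x + 1 admits a factorization into 2 irreducibles, namely (x^4 + x^2 + x + 1)(x^6 + x^5 + x^3 + 1), and also a factorization into 3 nonunits, namely (x + 1)(x^2 + 1)(x^7 + 2x^4 + 1), so it has two factorizations into irreducibles of different lengths. -/
/-!
Products of natural numbers cannot cancel, so the support of a product in `ℕ[X]` is exactly the
sumset of the supports of the factors. Hence a polynomial with constant term `1` whose support is
not a sumset `A + B` with `A, B ≠ {0}` is an atom of `ℕ[X]`; for the five factors at hand this is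
a finite check on a support of at most four exponents.
-/

open Polynomial

/-- `f` is irreducible (an atom) in the multiplicative monoid `ℕ[x]*`. -/
def MonoidIrreducible (f : Polynomial ℕ) : Prop :=
  f ≠ 0 ∧ ¬ IsUnit f ∧ ∀ g h : Polynomial ℕ, f = g * h → IsUnit g ∨ IsUnit h

open Pointwise

theorem Polynomial.support_mul_eq_add_support (g h : ℕ[X]) :
    (g * h).support = g.support + h.support := by
  ext n
  simp only [mem_support_iff, coeff_mul, Finset.mem_add, ne_eq, Finset.sum_eq_zero_iff,
    mul_eq_zero, not_forall, not_or, Prod.exists]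
  aesop

theorem Polynomial.eq_one_of_support_eq_zero {R : Type*} [Semiring R] {g : R[X]}
    (hg : g.support = {0}) (hg0 : g.coeff 0 = 1) : g = 1 := by
  ext n
  rcases eq_or_ne n 0 with rfl | hn
  · simp [hg0]
  · have : n ∉ g.support := by simp [hg, hn]
    simpa [coeff_one, hn] using this

/-- Restricting `A` and `B` to subsets of `S` loses nothing when `0 ∈ S` (then `A + B = S` forces
`0 ∈ A ∩ B`), and makes the predicate decidable. -/
def SumsetIndecomposable (S : Finset ℕ) : Prop :=
  ∀ A ∈ S.powerset, ∀ B ∈ S.powerset, A + B = S → A = {0} ∨ B = {0}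

instance (S : Finset ℕ) : Decidable (SumsetIndecomposable S) := by
  unfold SumsetIndecomposable; infer_instance

theorem monoidIrreducible_of_support_eq {f : ℕ[X]} {S : Finset ℕ} (hf0 : f.coeff 0 = 1)
    (hf : f.support = S) (hS0 : S ≠ {0}) (hS : SumsetIndecomposable S) : MonoidIrreducible f := by
  subst hf
  refine ⟨by rintro rfl; simp at hf0, fun hu => hS0 ?_, ?_⟩
  · rw [eq_C_of_natDegree_eq_zero (natDegree_eq_zero_of_isUnit hu), hf0]
    exact support_C one_ne_zero
  rintro g h rfl
  obtain ⟨hg0, hh0⟩ : g.coeff 0 = 1 ∧ h.coeff 0 = 1 := by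
    rw [← mul_eq_one, ← mul_coeff_zero, hf0]
  have h0g : 0 ∈ g.support := by simp [hg0]
  have h0h : 0 ∈ h.support := by simp [hh0]
  rw [support_mul_eq_add_support] at hS
  rcases hS _ (Finset.mem_powerset.2 (Finset.subset_add_left _ h0h))
      _ (Finset.mem_powerset.2 (Finset.subset_add_right _ h0g)) rfl with hg | hh
  · exact Or.inl (eq_one_of_support_eq_zero hg hg0 ▸ isUnit_one)
  · exact Or.inr (eq_one_of_support_eq_zero hh hh0 ▸ isUnit_one)

theorem monoidIrreducible_X_add_one : MonoidIrreducible (X + 1) :=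
  monoidIrreducible_of_support_eq (S := {0, 1}) (by simp)
    (by ext n; simp [coeff_X, coeff_one]; omega) (by decide) (by decide)

theorem monoidIrreducible_X_sq_add_one : MonoidIrreducible (X ^ 2 + 1) :=
  monoidIrreducible_of_support_eq (S := {0, 2}) (by simp)
    (by ext n; simp [coeff_X_pow, coeff_one]; omega) (by decide) (by decide)

theorem monoidIrreducible_X_pow_four_add_X_sq_add_X_add_one :
    MonoidIrreducible (X ^ 4 + X ^ 2 + X + 1) :=
  monoidIrreducible_of_support_eq (S := {0, 1, 2, 4}) (by simp)
    (by ext n; simp [coeff_X_pow, coeff_X, coeff_one]; omega) (by decide) (by decide)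

theorem monoidIrreducible_X_pow_six_add_X_pow_five_add_X_pow_three_add_one :
    MonoidIrreducible (X ^ 6 + X ^ 5 + X ^ 3 + 1) :=
  monoidIrreducible_of_support_eq (S := {0, 3, 5, 6}) (by simp)
    (by ext n; simp [coeff_X_pow, coeff_one]; omega) (by decide) (by decide)

theorem monoidIrreducible_X_pow_seven_add_two_mul_X_pow_four_add_one :
    MonoidIrreducible (X ^ 7 + 2 * X ^ 4 + 1) :=
  monoidIrreducible_of_support_eq (S := {0, 4, 7}) (by simp)
    (by ext n; simp [coeff_X_pow, coeff_one]; omega) (by decide) (by decide)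

/-- `ℕ[x]` is not half-factorial: the polynomial
`x^10 + x^9 + x^8 + 3x^7 + 2x^6 + 2x^5 + 2x^4 + x^3 + x^2 + x + 1` equals both
`(x^4+x^2+x+1)(x^6+x^5+x^3+1)` (a product of 2 irreducibles) and
`(x+1)(x^2+1)(x^7+2x^4+1)` (a product of 3 nonunits); hence it has two
factorizations into irreducibles of different lengths. -/
theorem natPolynomial_not_half_factorial :
    (X ^ 10 + X ^ 9 + X ^ 8 + 3 * X ^ 7 + 2 * X ^ 6 + 2 * X ^ 5 + 2 * X ^ 4
        + X ^ 3 + X ^ 2 + X + 1 : Polynomial ℕ)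
      = (X ^ 4 + X ^ 2 + X + 1) * (X ^ 6 + X ^ 5 + X ^ 3 + 1) ∧
    MonoidIrreducible (X ^ 4 + X ^ 2 + X + 1) ∧
    MonoidIrreducible (X ^ 6 + X ^ 5 + X ^ 3 + 1) ∧
    (X ^ 10 + X ^ 9 + X ^ 8 + 3 * X ^ 7 + 2 * X ^ 6 + 2 * X ^ 5 + 2 * X ^ 4
        + X ^ 3 + X ^ 2 + X + 1 : Polynomial ℕ)
      = (X + 1) * (X ^ 2 + 1) * (X ^ 7 + 2 * X ^ 4 + 1) ∧
    (∃ z z' : Multiset (Polynomial ℕ),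
      (∀ p ∈ z, MonoidIrreducible p) ∧
      z.prod = X ^ 10 + X ^ 9 + X ^ 8 + 3 * X ^ 7 + 2 * X ^ 6 + 2 * X ^ 5
        + 2 * X ^ 4 + X ^ 3 + X ^ 2 + X + 1 ∧
      (∀ p ∈ z', MonoidIrreducible p) ∧
      z'.prod = X ^ 10 + X ^ 9 + X ^ 8 + 3 * X ^ 7 + 2 * X ^ 6 + 2 * X ^ 5
        + 2 * X ^ 4 + X ^ 3 + X ^ 2 + X + 1 ∧
      z.card = 2 ∧ 3 ≤ z'.card) := by
  refine ⟨by ring, monoidIrreducible_X_pow_four_add_X_sq_add_X_add_one,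
    monoidIrreducible_X_pow_six_add_X_pow_five_add_X_pow_three_add_one, by ring,
    {X ^ 4 + X ^ 2 + X + 1, X ^ 6 + X ^ 5 + X ^ 3 + 1},
    {X + 1, X ^ 2 + 1, X ^ 7 + 2 * X ^ 4 + 1}, ?_, ?_, ?_, ?_, rfl, le_rfl⟩ <;>
    simp only [Multiset.insert_eq_cons, Multiset.mem_cons, Multiset.mem_singleton,
      Multiset.prod_cons, Multiset.prod_singleton]
  · rintro p (rfl | rfl)
    exacts [monoidIrreducible_X_pow_four_add_X_sq_add_X_add_one,
      monoidIrreducible_X_pow_six_add_X_pow_five_add_X_pow_three_add_one]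
  · ring
  · rintro p (rfl | rfl | rfl)
    exacts [monoidIrreducible_X_add_one, monoidIrreducible_X_sq_add_one,
      monoidIrreducible_X_pow_seven_add_two_mul_X_pow_four_add_one]
  · ring
end

section
/- ℕ[x] is not length-factorial: the polynomial x^5 + x^4 + x^3 + x^2 + x + 1 has two distinct factorizations into irreducibles of the same length, namely (x + 1)(x^4 + x^2 + 1) and (x^3 + 1)(x^2 + x + 1), where all four factors are irreducible in ℕ[x] and the two factorizations are distinct. -/
/-!
Over `ℕ` there is no cancellation, so `p.eval 1` is the sum of the coefficients of `p`, and a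
factor `g` with `g.eval 1 = 1` and nonzero constant term must be `1`. Since
`f = g * h` gives `f.eval 1 = g.eval 1 * h.eval 1`, every `f ∈ ℕ[X]` with nonzero constant term
and prime coefficient sum is an atom. The four factors have coefficient sums `2, 3, 2, 3`.
-/

open Polynomial

namespace Polynomial

theorem coeff_zero_add_coeff_le_eval_one (p : ℕ[X]) {n : ℕ} (hn : n ≠ 0) :
    p.coeff 0 + p.coeff n ≤ p.eval 1 := by
  have hsub : ({0, n} : Finset ℕ) ⊆ Finset.range (max n p.natDegree + 1) := by
    intro i hi
    simp only [Finset.mem_insert, Finset.mem_singleton] at hi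
    rw [Finset.mem_range]
    omega
  calc p.coeff 0 + p.coeff n = ∑ i ∈ {0, n}, p.coeff i := by
        rw [Finset.sum_pair hn.symm]
    _ ≤ ∑ i ∈ Finset.range (max n p.natDegree + 1), p.coeff i :=
        Finset.sum_le_sum_of_subset hsub
    _ = p.eval 1 := by
        rw [eval_eq_sum_range' (n := max n p.natDegree + 1) (by omega)]
        simp

theorem eq_one_of_eval_one_eq_one {p : ℕ[X]} (h1 : p.eval 1 = 1) (h0 : p.coeff 0 ≠ 0) :
    p = 1 := by
  ext n
  rcases Nat.eq_zero_or_pos n with rfl | hn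
  · have := p.coeff_zero_add_coeff_le_eval_one one_ne_zero
    rw [coeff_one_zero]
    omega
  · have := p.coeff_zero_add_coeff_le_eval_one hn.ne'
    rw [coeff_one, if_neg hn.ne']
    omega

theorem monoidIrreducible_of_coeff_zero_ne_zero_of_prime_eval_one {f : ℕ[X]}
    (h0 : f.coeff 0 ≠ 0) (hp : (f.eval 1).Prime) : MonoidIrreducible f := by
  refine ⟨fun hf => by simp [hf] at h0, fun hu => ?_, fun g h hgh => ?_⟩
  · have : f.eval 1 = 1 := Nat.isUnit_iff.mp ((evalRingHom 1).isUnit_map hu)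
    exact Nat.not_prime_one (this ▸ hp)
  · have hconst : g.coeff 0 * h.coeff 0 ≠ 0 := by rwa [← mul_coeff_zero, ← hgh]
    rw [hgh, eval_mul, Nat.prime_mul_iff] at hp
    rcases hp with ⟨-, hh⟩ | ⟨-, hg⟩
    · exact .inr (eq_one_of_eval_one_eq_one hh (right_ne_zero_of_mul hconst) ▸ isUnit_one)
    · exact .inl (eq_one_of_eval_one_eq_one hg (left_ne_zero_of_mul hconst) ▸ isUnit_one)

end Polynomial

/-- `ℕ[x]` is not length-factorial: `x^5 + x^4 + x^3 + x^2 + x + 1` has two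
distinct factorizations into irreducibles of the same length `2`, namely
`(x+1)(x^4+x^2+1)` and `(x^3+1)(x^2+x+1)`. -/
theorem natPolynomial_not_length_factorial :
    (X ^ 5 + X ^ 4 + X ^ 3 + X ^ 2 + X + 1 : Polynomial ℕ)
      = (X + 1) * (X ^ 4 + X ^ 2 + 1) ∧
    (X ^ 5 + X ^ 4 + X ^ 3 + X ^ 2 + X + 1 : Polynomial ℕ)
      = (X ^ 3 + 1) * (X ^ 2 + X + 1) ∧
    MonoidIrreducible (X + 1) ∧ MonoidIrreducible (X ^ 4 + X ^ 2 + 1) ∧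
    MonoidIrreducible (X ^ 3 + 1) ∧ MonoidIrreducible (X ^ 2 + X + 1) ∧
    ({X + 1, X ^ 4 + X ^ 2 + 1} : Multiset (Polynomial ℕ))
      ≠ {X ^ 3 + 1, X ^ 2 + X + 1} := by
  refine ⟨by ring, by ring, ?_, ?_, ?_, ?_, ?_⟩
  iterate 4
    exact monoidIrreducible_of_coeff_zero_ne_zero_of_prime_eval_one (by simp) (by norm_num)
  intro h
  -- evaluated at `2` the two factorizations become `{3, 21}` and `{9, 7}`
  have hvalues := congrArg (Multiset.map (eval 2)) h
  norm_num at hvalues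
  exact absurd hvalues (by decide)
end

section
/- For natural numbers n, m ≥ 1, the polynomial (y + n)^m (y^2 − y + 1) has all coefficients nonnegative (i.e., lies in ℕ[y]) if and only if m ≥ n. -/
/-!
The coefficients of `(y + n)^m` are `a i = n^(m-i) * C(m, i)`, and the coefficient of `y^(j+2)`
in the product is `a j - a (j+1) + a (j+2)`. This is nonnegative for every `m`: dividing by
`n^(m-j-2) * C(m, j)` and clearing denominators turns it into `n p q ≤ n² p(p-1) + q(q-1)` with
`p = j + 2`, `q = m - j`, a consequence of AM-GM. The constant coefficient is `n^m > 0`, so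
everything hinges on the linear coefficient `a 1 - a 0 = n^(m-1) (m - n)`.
-/

open Polynomial

section
variable {R : Type*} [Ring R] (p : R[X])

theorem coeff_mul_X_sq_sub_X_add_one_zero : (p * (X ^ 2 - X + 1)).coeff 0 = p.coeff 0 := by
  simp [mul_add, mul_sub]

theorem coeff_mul_X_sq_sub_X_add_one_one :
    (p * (X ^ 2 - X + 1)).coeff 1 = p.coeff 1 - p.coeff 0 := by
  simp [mul_add, mul_sub, coeff_mul_X_pow', coeff_mul_X, neg_add_eq_sub]

theorem coeff_mul_X_sq_sub_X_add_one_add_two (k : ℕ) :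
    (p * (X ^ 2 - X + 1)).coeff (k + 2) = p.coeff k - p.coeff (k + 1) + p.coeff (k + 2) := by
  simp [mul_add, mul_sub, coeff_mul_X_pow', coeff_mul_X]
end

/-- For `q ≥ 2`: `2 (rhs - lhs) = (n(j+2) - q)² + n² j(j+2) + q(q-2)`. -/
theorem mul_mul_le_sq_mul_add (n j q : ℕ) :
    n * (j + 2) * q ≤ n ^ 2 * ((j + 1) * (j + 2)) + q * (q - 1) := by
  rcases q with _ | _ | q
  · simp
  · have : n ≤ n ^ 2 * (j + 1) :=
      (Nat.le_self_pow two_ne_zero n).trans (Nat.le_mul_of_pos_right _ j.succ_pos)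
    simp only [Nat.sub_self, mul_zero, add_zero]
    nlinarith
  · simp only [Nat.add_sub_cancel]
    zify
    linarith [sq_nonneg ((n:ℤ) * (j + 2) - (q + 2)),
      (by positivity : (0:ℤ) ≤ n ^ 2 * (j + 2) * j), (by positivity : (0:ℤ) ≤ (q + 2) * q)]

theorem mul_choose_succ_le (n m j : ℕ) :
    n * m.choose (j + 1) ≤ n ^ 2 * m.choose j + m.choose (j + 2) := by
  have h1 := Nat.choose_succ_right_eq m j
  have h2 := Nat.choose_succ_right_eq m (j + 1)
  rw [show m - (j + 1) = m - j - 1 by omega] at h2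
  have key := Nat.mul_le_mul_left (m.choose j) (mul_mul_le_sq_mul_add n j (m - j))
  generalize m - j = q at *
  generalize q - 1 = r at *
  refine Nat.le_of_mul_le_mul_left ?_ (by positivity : 0 < (j + 1) * (j + 2))
  zify at *
  linear_combination key + (n * (j + 2) - r) * h1 - (j + 1) * h2

theorem pow_sub_mul_choose_succ_le {n : ℕ} (hn : 0 < n) (m j : ℕ) :
    n ^ (m - (j + 1)) * m.choose (j + 1) ≤
      n ^ (m - j) * m.choose j + n ^ (m - (j + 2)) * m.choose (j + 2) := by
  rcases lt_trichotomy m (j + 1) with hlt | rfl | hgt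
  · simp [Nat.choose_eq_zero_of_lt hlt]
  · simp only [Nat.sub_self, pow_zero, Nat.choose_self, Nat.add_sub_cancel_left, pow_one,
      Nat.choose_succ_self_right, Nat.choose_succ_self, mul_zero, add_zero, mul_one]
    exact Nat.mul_pos hn j.succ_pos
  · obtain ⟨e, rfl⟩ := Nat.exists_eq_add_of_le (Nat.succ_le_of_lt hgt)
    rw [show j + 2 + e - (j + 1) = e + 1 by omega, show j + 2 + e - j = e + 2 by omega,
      show j + 2 + e - (j + 2) = e by omega]
    have := Nat.mul_le_mul_left (n ^ e) (mul_choose_succ_le n (j + 2 + e) j)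
    calc _ = n ^ e * (n * (j + 2 + e).choose (j + 1)) := by ring
      _ ≤ _ := this
      _ = _ := by ring

theorem pow_le_pow_pred_mul_iff {n m : ℕ} (hn : 0 < n) (hm : 0 < m) :
    n ^ m ≤ n ^ (m - 1) * m ↔ n ≤ m := by
  obtain ⟨k, rfl⟩ := Nat.exists_eq_add_one.2 hm
  rw [Nat.add_sub_cancel, pow_succ]
  exact Nat.mul_le_mul_left_iff (by positivity)

/-- For `n, m ≥ 1`, the polynomial `(y + n)^m (y^2 - y + 1) ∈ ℤ[y]` has all
coefficients nonnegative if and only if `m ≥ n`. -/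
theorem coeffs_nonneg_iff :
    ∀ n m : ℕ, 1 ≤ n → 1 ≤ m →
      ((∀ k : ℕ,
          0 ≤ (((X + C (n : ℤ)) ^ m * (X ^ 2 - X + 1)) : Polynomial ℤ).coeff k)
        ↔ n ≤ m) := by
  intro n m hn hm
  have coeff_pow (i : ℕ) :
      ((X + C (n : ℤ)) ^ m).coeff i = ((n ^ (m - i) * m.choose i : ℕ) : ℤ) := by
    rw [coeff_X_add_C_pow]; push_cast; rfl
  have coeff_one_nonneg : 0 ≤ ((X + C (n : ℤ)) ^ m * (X ^ 2 - X + 1)).coeff 1 ↔ n ≤ m := by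
    rw [coeff_mul_X_sq_sub_X_add_one_one, coeff_pow, coeff_pow, sub_nonneg, Nat.cast_le]
    simpa using pow_le_pow_pred_mul_iff hn hm
  refine ⟨fun h => coeff_one_nonneg.1 (h 1), fun hnm k => ?_⟩
  match k with
  | 0 => rw [coeff_mul_X_sq_sub_X_add_one_zero, coeff_pow]; positivity
  | 1 => exact coeff_one_nonneg.2 hnm
  | j + 2 =>
    rw [coeff_mul_X_sq_sub_X_add_one_add_two, coeff_pow, coeff_pow, coeff_pow,
      sub_add_eq_add_sub, sub_nonneg]
    exact_mod_cast pow_sub_mul_choose_succ_le hn m j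
end

section
/- The multiplicative monoid of nonzero polynomials in ℕ[x] has full and infinite elasticity: for every rational q > 1 there exists f ∈ ℕ[x] with elasticity ρ(f) = q, and sup of elasticities is infinite. Concretely, for k ≥ 1 and n ≥ 2, the polynomial g = (x + n)^n (x^2 − x + 1)(x + 1)^k has exactly two factorization lengths, k + 1 and k + n, so ρ(g) = (k + n)/(k + 1), and {(k+n)/(k+1) : k ∈ ℕ, n ≥ 2} = ℚ ∩ (1, ∞). -/
open Polynomial

/-- The set of lengths of factorizations of `f` into irreducibles of `ℕ[x]`. -/
def LengthSet (f : Polynomial ℕ) : Set ℕ :=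
  {L : ℕ | ∃ z : Multiset (Polynomial ℕ),
    (∀ p ∈ z, MonoidIrreducible p) ∧ z.prod = f ∧ z.card = L}

/-!
Over `ℤ`, `g = (x+n)^n Φ (x+1)^k` with `Φ = x² - x + 1` is a product of the primes `x + 1`,
`x + n` and `Φ`, so every factor of `g` in `ℕ[x]` is monic and maps to some
`(x+1)^a (x+n)^b Φ^e`. An atom with `e = 0` is linear, because `x + 1` and `x + n` can be split
off inside `ℕ[x]`. Since `Φ ∥ g`, exactly one atom of a factorization has `e = 1`; splitting off
`x³ + 1 = (x+1) Φ` shows it is `x³ + 1` or `(x+n)^b Φ`, and then `b = n`, as the coefficient of `x`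
in `(x+n)^b Φ` is `n^(b-1) (b - n)`. Counting degrees, a factorization has `k + n` atoms in the
first case and `k + 1` in the second, and both occur.
-/

local notation "ι" => Nat.castRingHom ℤ
local notation "Φ" => (X ^ 2 - X + 1 : ℤ[X])

theorem monoidIrreducible_iff {f : ℕ[X]} : MonoidIrreducible f ↔ Irreducible f := by
  rw [MonoidIrreducible, irreducible_iff]
  exact ⟨fun h => h.2, fun h => ⟨fun h0 => not_irreducible_zero (h0 ▸ irreducible_iff.2 h), h⟩⟩

theorem map_natCast_injective : Function.Injective (map ι) :=
  map_injective _ Nat.cast_injective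

instance : Subsingleton ℕ[X]ˣ := by
  refine ⟨fun u v => Units.ext ?_⟩
  have (w : ℕ[X]ˣ) : (w : ℕ[X]) = 1 := by
    obtain ⟨r, hr, h⟩ := Polynomial.isUnit_iff.1 w.isUnit
    rw [← h, Nat.isUnit_iff.1 hr, C_1]
  rw [this u, this v]

instance : IsLocalHom (mapRingHom ι) where
  map_nonunit p hp := by
    obtain ⟨r, hr, hrp⟩ := Polynomial.isUnit_iff.1 hp
    have hr0 : 0 ≤ r := by
      have := congrArg (coeff · 0) hrp
      simp only [coeff_C_zero, coe_mapRingHom, coeff_map, eq_natCast] at this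
      exact this ▸ (p.coeff 0).cast_nonneg
    obtain rfl : r = 1 := by rcases Int.isUnit_iff.1 hr with rfl | rfl <;> simp_all
    rw [isUnit_iff_eq_one]
    exact map_natCast_injective (by simpa using hrp.symm)

theorem natDegree_map_natCast (p : ℕ[X]) : (p.map ι).natDegree = p.natDegree :=
  natDegree_map_eq_of_injective Nat.cast_injective p

theorem monic_of_dvd_of_monic {p g : ℕ[X]} (hg : g.Monic) (h : p ∣ g) : p.Monic := by
  obtain ⟨q, rfl⟩ := h
  exact Nat.eq_one_of_mul_eq_one_right (by rw [← leadingCoeff_mul]; exact hg)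

theorem monic_of_monic_map {p : ℕ[X]} (h : (p.map ι).Monic) : p.Monic := by
  rw [Monic, leadingCoeff_map_of_injective Nat.cast_injective] at h
  exact Nat.cast_eq_one.1 h

theorem Irreducible.eq_one_of_map_eq_mul {q : ℕ[X]} (hq : Irreducible q) {A B : ℤ[X]}
    (hA : A ∈ lifts ι) (hB : B ∈ lifts ι) (hA₀ : A.natDegree ≠ 0) (h : q.map ι = A * B) :
    B = 1 := by
  obtain ⟨a, rfl⟩ := (mem_lifts A).1 hA
  obtain ⟨b, rfl⟩ := (mem_lifts B).1 hB
  rw [← Polynomial.map_mul] at h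
  rcases hq.isUnit_or_isUnit (map_natCast_injective h) with ha | hb
  · rw [isUnit_iff_eq_one.1 ha, Polynomial.map_one, natDegree_one] at hA₀
    exact absurd rfl hA₀
  · rw [isUnit_iff_eq_one.1 hb, Polynomial.map_one]

theorem irreducible_X_add_C (c : ℕ) : Irreducible (X + C c : ℕ[X]) :=
  Irreducible.of_map (f := mapRingHom ι) (by simpa using irreducible_X_sub_C (-(c : ℤ)))

theorem prime_X_sq_sub_X_add_one : Prime Φ := by
  rw [← cyclotomic_six]
  exact (cyclotomic.irreducible (by norm_num)).prime

theorem monic_X_sq_sub_X_add_one : Monic Φ := by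
  rw [← cyclotomic_six]; exact cyclotomic.monic 6 ℤ

theorem natDegree_X_sq_sub_X_add_one : natDegree Φ = 2 := by
  rw [← cyclotomic_six, natDegree_cyclotomic]; rfl

theorem monic_X_add_one : Monic (X + 1 : ℤ[X]) := by simpa using monic_X_add_C (1 : ℤ)

theorem natDegree_X_add_one : (X + 1 : ℤ[X]).natDegree = 1 := by
  simpa using natDegree_X_add_C (1 : ℤ)

theorem monic_X_add_one_pow_mul (n a b e : ℕ) :
    ((X + 1 : ℤ[X]) ^ a * (X + C (n : ℤ)) ^ b * Φ ^ e).Monic :=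
  ((monic_X_add_one.pow a).mul ((monic_X_add_C _).pow b)).mul (monic_X_sq_sub_X_add_one.pow e)

theorem natDegree_X_add_one_pow_mul (n a b e : ℕ) :
    ((X + 1 : ℤ[X]) ^ a * (X + C (n : ℤ)) ^ b * Φ ^ e).natDegree = a + b + 2 * e := by
  have h₁ := monic_X_add_one.pow a
  have h₂ := (monic_X_add_C (n : ℤ)).pow b
  rw [(h₁.mul h₂).natDegree_mul (monic_X_sq_sub_X_add_one.pow e), h₁.natDegree_mul h₂,
    monic_X_add_one.natDegree_pow, (monic_X_add_C _).natDegree_pow,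
    monic_X_sq_sub_X_add_one.natDegree_pow, natDegree_X_add_C,
    natDegree_X_sq_sub_X_add_one, natDegree_X_add_one]
  ring

theorem natDegree_X_add_one_pow_mul_X_add_C_pow (n a b : ℕ) :
    ((X + 1 : ℤ[X]) ^ a * (X + C (n : ℤ)) ^ b).natDegree = a + b := by
  simpa using natDegree_X_add_one_pow_mul n a b 0

theorem X_sq_sub_X_add_one_not_dvd (n a b : ℕ) : ¬ Φ ∣ (X + 1) ^ a * (X + C (n : ℤ)) ^ b := by
  have hΦ := prime_X_sq_sub_X_add_one
  have key (c : ℤ) : ¬ Φ ∣ X + C c := fun hc => by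
    have := natDegree_le_of_dvd hc (X_add_C_ne_zero c)
    rw [natDegree_X_sq_sub_X_add_one, natDegree_X_add_C] at this
    omega
  intro h
  rcases hΦ.dvd_mul.1 h with h | h
  · exact key 1 (by simpa using hΦ.dvd_of_dvd_pow h)
  · exact key n (hΦ.dvd_of_dvd_pow h)

theorem X_sq_sub_X_add_one_sq_not_dvd (n a b : ℕ) :
    ¬ Φ ^ 2 ∣ (X + 1) ^ a * (X + C (n : ℤ)) ^ b * Φ := by
  rw [sq, mul_dvd_mul_iff_right prime_X_sq_sub_X_add_one.ne_zero]
  exact X_sq_sub_X_add_one_not_dvd n a b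

theorem exists_eq_of_monic_of_dvd (n : ℕ) {a₀ b₀ e₀ : ℕ} {P : ℤ[X]} (hP : P.Monic)
    (h : P ∣ (X + 1) ^ a₀ * (X + C (n : ℤ)) ^ b₀ * Φ ^ e₀) :
    ∃ a ≤ a₀, ∃ b ≤ b₀, ∃ e ≤ e₀, P = (X + 1) ^ a * (X + C (n : ℤ)) ^ b * Φ ^ e := by
  obtain ⟨P₁₂, P₃, h₁₂, h₃, rfl⟩ := exists_dvd_and_dvd_of_dvd_mul h
  obtain ⟨P₁, P₂, h₁, h₂, rfl⟩ := exists_dvd_and_dvd_of_dvd_mul h₁₂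
  obtain ⟨a, ha, h₁⟩ := (dvd_prime_pow (by simpa using prime_X_sub_C (-1 : ℤ)) a₀).1 h₁
  obtain ⟨b, hb, h₂⟩ := (dvd_prime_pow (by simpa using prime_X_sub_C (-(n : ℤ))) b₀).1 h₂
  obtain ⟨e, he, h₃⟩ := (dvd_prime_pow prime_X_sq_sub_X_add_one e₀).1 h₃
  exact ⟨a, ha, b, hb, e, he,
    eq_of_monic_of_associated hP (monic_X_add_one_pow_mul n a b e) ((h₁.mul_mul h₂).mul_mul h₃)⟩

theorem mem_lifts_natCast_iff (P : ℤ[X]) : P ∈ lifts ι ↔ ∀ j, 0 ≤ P.coeff j := by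
  simp only [lifts_iff_coeff_lifts, Set.mem_range, eq_natCast]
  exact forall_congr' fun j =>
    ⟨fun ⟨m, hm⟩ => hm ▸ m.cast_nonneg, fun h => (Int.eq_ofNat_of_zero_le h).imp fun _ h => h.symm⟩

theorem coeff_mul_X_sq_sub_X_add_one_zero_s15 (A : ℤ[X]) : (A * Φ).coeff 0 = A.coeff 0 := by
  simp [mul_add, mul_sub]

theorem coeff_mul_X_sq_sub_X_add_one_one_s15 (A : ℤ[X]) :
    (A * Φ).coeff 1 = A.coeff 1 - A.coeff 0 := by
  simp only [mul_add, mul_sub, mul_one, coeff_add, coeff_sub, coeff_mul_X_pow', coeff_mul_X,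
    Nat.not_ofNat_le_one, if_false]
  ring

theorem coeff_mul_X_sq_sub_X_add_one_add_two_s15 (A : ℤ[X]) (j : ℕ) :
    (A * Φ).coeff (j + 2) = A.coeff j - A.coeff (j + 1) + A.coeff (j + 2) := by
  simp [mul_add, mul_sub, coeff_mul_X_pow', coeff_mul_X]

theorem coeff_X_add_C_self_pow_succ_le (n i : ℕ) :
    ((X + C (n : ℤ)) ^ n).coeff (i + 1) ≤ ((X + C (n : ℤ)) ^ n).coeff i := by
  rw [coeff_X_add_C_pow, coeff_X_add_C_pow]
  rcases le_or_gt n i with hi | hi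
  · simp only [Nat.choose_eq_zero_of_lt (Nat.lt_succ_of_le hi), Nat.cast_zero, mul_zero]
    positivity
  have hchoose : n.choose (i + 1) ≤ n * n.choose i := by
    have := Nat.choose_succ_right_eq n i
    nlinarith [Nat.sub_le n i]
  calc (n : ℤ) ^ (n - (i + 1)) * (n.choose (i + 1) : ℕ)
      ≤ n ^ (n - (i + 1)) * (n * n.choose i : ℕ) := by gcongr
    _ = n ^ (n - i) * n.choose i := by
      rw [show n - i = n - (i + 1) + 1 by omega, pow_succ]; push_cast; ring

theorem X_add_C_self_pow_mul_mem_lifts {n : ℕ} (hn : n ≠ 0) :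
    (X + C (n : ℤ)) ^ n * Φ ∈ lifts ι := by
  set A := (X + C (n : ℤ)) ^ n
  rw [mem_lifts_natCast_iff]
  have hA (j : ℕ) : 0 ≤ A.coeff j := by rw [coeff_X_add_C_pow]; positivity
  rintro (_ | _ | j)
  · rw [coeff_mul_X_sq_sub_X_add_one_zero_s15]; exact hA 0
  · rw [coeff_mul_X_sq_sub_X_add_one_one_s15, coeff_X_add_C_pow, coeff_X_add_C_pow]
    obtain ⟨m, rfl⟩ := Nat.exists_eq_succ_of_ne_zero hn
    simp [pow_succ]
  · rw [coeff_mul_X_sq_sub_X_add_one_add_two_s15]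
    linarith [hA (j + 2), coeff_X_add_C_self_pow_succ_le n j]

theorem le_of_X_add_C_pow_mul_mem_lifts {n b : ℕ} (h : (X + C (n : ℤ)) ^ b * Φ ∈ lifts ι) :
    n ≤ b := by
  by_contra! hb
  have h₁ := (mem_lifts_natCast_iff _).1 h 1
  rw [coeff_mul_X_sq_sub_X_add_one_one_s15, coeff_X_add_C_pow, coeff_X_add_C_pow] at h₁
  rcases b with _ | b
  · simp at h₁
  · have : (0 : ℤ) < n ^ b := pow_pos (by exact_mod_cast (by omega : 0 < n)) b
    simp only [Nat.sub_zero, Nat.add_sub_cancel, Nat.choose_one_right, Nat.choose_zero_right,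
      pow_succ] at h₁
    push_cast at h₁
    nlinarith [(by exact_mod_cast hb : ((b : ℤ) + 1) < n)]

theorem X_add_one_pow_mul_X_add_C_pow_mem_lifts (n a b : ℕ) :
    (X + 1 : ℤ[X]) ^ a * (X + C (n : ℤ)) ^ b ∈ lifts ι :=
  (mem_lifts _).2 ⟨(X + 1) ^ a * (X + C n) ^ b, by simp⟩

theorem irreducible_of_map_eq_mul_X_sq_sub_X_add_one (n : ℕ) {a₀ b₀ : ℕ} {q : ℕ[X]}
    (hq : q.map ι = (X + 1) ^ a₀ * (X + C (n : ℤ)) ^ b₀ * Φ)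
    (hmin : ∀ a ≤ a₀, ∀ b ≤ b₀,
      (X + 1) ^ a * (X + C (n : ℤ)) ^ b * Φ ∈ lifts ι → a = a₀ ∧ b = b₀) :
    Irreducible q := by
  have hq' : q.map ι = (X + 1) ^ a₀ * (X + C (n : ℤ)) ^ b₀ * Φ ^ 1 := by rw [hq, pow_one]
  have hmon : q.Monic := monic_of_monic_map (hq' ▸ monic_X_add_one_pow_mul n a₀ b₀ 1)
  have hdeg : q.natDegree = a₀ + b₀ + 2 := by
    rw [← natDegree_map_natCast, hq', natDegree_X_add_one_pow_mul]
  have key (u v : ℕ[X]) (huv : q = u * v) (hΦ : Φ ∣ u.map ι) : IsUnit v := by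
    have hu : u.map ι ∣ q.map ι := Polynomial.map_dvd ι ⟨v, huv⟩
    have humon := (monic_of_dvd_of_monic hmon ⟨v, huv⟩).map ι
    obtain ⟨a, ha, b, hb, e, he, hform⟩ := exists_eq_of_monic_of_dvd n humon (hq' ▸ hu)
    obtain rfl : e = 1 := by
      by_contra he1
      obtain rfl : e = 0 := by omega
      exact X_sq_sub_X_add_one_not_dvd n a b (by simpa [hform] using hΦ)
    obtain ⟨rfl, rfl⟩ := hmin a ha b hb (by rw [← pow_one Φ, ← hform]; exact ⟨u, rfl⟩)
    rw [← hq', ← mul_one (u.map ι), huv, Polynomial.map_mul] at hform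
    rw [isUnit_iff_eq_one]
    exact map_natCast_injective (by simpa using (mul_left_cancel₀ humon.ne_zero hform).symm)
  refine ⟨fun h => by simp [isUnit_iff_eq_one.1 h] at hdeg, fun u v huv => ?_⟩
  rw [huv, Polynomial.map_mul] at hq
  rcases prime_X_sq_sub_X_add_one.dvd_mul.1 (by rw [hq]; exact dvd_mul_left _ _) with h | h
  · exact Or.inr (key u v huv h)
  · exact Or.inl (key v u (huv.trans (mul_comm u v)) h)

theorem map_X_pow_three_add_one : (X ^ 3 + 1 : ℕ[X]).map ι = (X + 1) * Φ := by
  simp only [Polynomial.map_add, Polynomial.map_pow, map_X, Polynomial.map_one]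
  ring

theorem irreducible_X_pow_three_add_one : Irreducible (X ^ 3 + 1 : ℕ[X]) := by
  refine irreducible_of_map_eq_mul_X_sq_sub_X_add_one 1 (a₀ := 1) (b₀ := 0)
    (by rw [map_X_pow_three_add_one]; ring) fun a ha b hb h => ?_
  obtain rfl : b = 0 := by omega
  refine ⟨by_contra fun ha1 => ?_, rfl⟩
  obtain rfl : a = 0 := by omega
  simpa using le_of_X_add_C_pow_mul_mem_lifts (n := 1) (b := 0) (by simpa using h)

theorem irreducible_of_map_eq_X_add_C_self_pow_mul {n : ℕ} {q : ℕ[X]}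
    (hq : q.map ι = (X + C (n : ℤ)) ^ n * Φ) : Irreducible q :=
  irreducible_of_map_eq_mul_X_sq_sub_X_add_one n (a₀ := 0) (b₀ := n) (by rw [hq]; ring)
    fun a ha b hb h => ⟨by omega,
      le_antisymm hb (le_of_X_add_C_pow_mul_mem_lifts (by simpa [Nat.le_zero.1 ha] using h))⟩

theorem natDegree_eq_one_of_irreducible_of_not_dvd {n a₀ b₀ : ℕ} {q : ℕ[X]} (hq : Irreducible q)
    (hmon : q.Monic) (hdvd : q.map ι ∣ (X + 1) ^ a₀ * (X + C (n : ℤ)) ^ b₀ * Φ)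
    (hΦ : ¬ Φ ∣ q.map ι) : q.natDegree = 1 := by
  obtain ⟨a, -, b, -, e, he, hform⟩ :=
    exists_eq_of_monic_of_dvd n (a₀ := a₀) (b₀ := b₀) (e₀ := 1) (hmon.map ι) (by rwa [pow_one])
  obtain rfl : e = 0 := by
    by_contra he0
    exact hΦ (hform ▸ Dvd.intro_left _ (by rw [show e = 1 by omega, pow_one]))
  rw [pow_zero, mul_one] at hform
  have hX1 : X + 1 ∈ lifts ι := (mem_lifts _).2 ⟨X + 1, by simp⟩
  have hXn : X + C (n : ℤ) ∈ lifts ι := (mem_lifts _).2 ⟨X + C n, by simp⟩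
  rw [← natDegree_map_natCast, hform, natDegree_X_add_one_pow_mul_X_add_C_pow]
  rcases a with _ | a
  · rcases b with _ | b
    · exact absurd (isUnit_iff_eq_one.2 (map_natCast_injective (by simpa using hform)))
        hq.not_isUnit
    · have := hq.eq_one_of_map_eq_mul hXn (X_add_one_pow_mul_X_add_C_pow_mem_lifts n 0 b)
        (by rw [natDegree_X_add_C]; exact one_ne_zero) (by rw [hform]; ring)
      have := congrArg natDegree this
      rw [natDegree_X_add_one_pow_mul_X_add_C_pow, natDegree_one] at this
      omega
  · have := hq.eq_one_of_map_eq_mul hX1 (X_add_one_pow_mul_X_add_C_pow_mem_lifts n a b)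
      (by rw [natDegree_X_add_one]; exact one_ne_zero) (by rw [hform]; ring)
    have := congrArg natDegree this
    rw [natDegree_X_add_one_pow_mul_X_add_C_pow, natDegree_one] at this
    omega

theorem natDegree_eq_three_or_of_irreducible_of_dvd {n a₀ : ℕ} {q : ℕ[X]} (hq : Irreducible q)
    (hmon : q.Monic) (hdvd : q.map ι ∣ (X + 1) ^ a₀ * (X + C (n : ℤ)) ^ n * Φ)
    (hΦ : Φ ∣ q.map ι) : q.natDegree = 3 ∨ q.natDegree = n + 2 := by
  obtain ⟨a, -, b, hb, e, he, hform⟩ :=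
    exists_eq_of_monic_of_dvd n (a₀ := a₀) (b₀ := n) (e₀ := 1) (hmon.map ι) (by rwa [pow_one])
  obtain rfl : e = 1 := by
    by_contra he1
    obtain rfl : e = 0 := by omega
    exact X_sq_sub_X_add_one_not_dvd n a b (by simpa [hform] using hΦ)
  rw [← natDegree_map_natCast, hform, natDegree_X_add_one_pow_mul]
  rcases a with _ | a
  · have := le_of_X_add_C_pow_mul_mem_lifts (n := n) (b := b)
      ((mem_lifts _).2 ⟨q, by rw [hform]; ring⟩)
    omega
  · have hcube : (X + 1) * Φ ∈ lifts ι := (mem_lifts _).2 ⟨X ^ 3 + 1, map_X_pow_three_add_one⟩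
    have hcube₀ : ((X + 1) * Φ).natDegree ≠ 0 := by
      rw [monic_X_add_one.natDegree_mul monic_X_sq_sub_X_add_one, natDegree_X_add_one,
        natDegree_X_sq_sub_X_add_one]
      norm_num
    have := hq.eq_one_of_map_eq_mul hcube (X_add_one_pow_mul_X_add_C_pow_mem_lifts n a b)
      hcube₀ (by rw [hform]; ring)
    have := congrArg natDegree this
    rw [natDegree_X_add_one_pow_mul_X_add_C_pow, natDegree_one] at this
    omega

theorem card_eq_of_prod_eq {k n : ℕ} {g : ℕ[X]}
    (hg : g.map ι = (X + C (n : ℤ)) ^ n * Φ * (X + 1) ^ k) {z : Multiset ℕ[X]}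
    (hz : ∀ p ∈ z, Irreducible p) (hprod : z.prod = g) :
    Multiset.card z = k + 1 ∨ Multiset.card z = k + n := by
  have hG : g.map ι = (X + 1) ^ k * (X + C (n : ℤ)) ^ n * Φ := by rw [hg]; ring
  have hgmon : g.Monic := monic_of_monic_map (by simpa [hG] using monic_X_add_one_pow_mul n k n 1)
  have hdvd (p : ℕ[X]) (hp : p ∈ z) : p ∣ g := hprod ▸ Multiset.dvd_prod hp
  have hmon (p : ℕ[X]) (hp : p ∈ z) : p.Monic := monic_of_dvd_of_monic hgmon (hdvd p hp)
  have hdvd' (p : ℕ[X]) (hp : p ∈ z) : p.map ι ∣ (X + 1) ^ k * (X + C (n : ℤ)) ^ n * Φ :=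
    hG ▸ Polynomial.map_dvd ι (hdvd p hp)
  obtain ⟨_, hP₀, hΦp₀⟩ := prime_X_sq_sub_X_add_one.exists_mem_multiset_dvd (s := z.map (map ι))
    (by rw [← Polynomial.map_multiset_prod, hprod, hG]; exact dvd_mul_left _ _)
  obtain ⟨p₀, hp₀, rfl⟩ := Multiset.mem_map.1 hP₀
  have hdeg₀ := natDegree_eq_three_or_of_irreducible_of_dvd (hz p₀ hp₀) (hmon p₀ hp₀)
    (hdvd' p₀ hp₀) hΦp₀
  obtain ⟨z', rfl⟩ := Multiset.exists_cons_of_mem hp₀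
  have hdeg' (q : ℕ[X]) (hq : q ∈ z') : q.natDegree = 1 := by
    have hq' : q ∈ p₀ ::ₘ z' := Multiset.mem_cons_of_mem hq
    refine natDegree_eq_one_of_irreducible_of_not_dvd (hz q hq') (hmon q hq') (hdvd' q hq')
      fun hΦq => X_sq_sub_X_add_one_sq_not_dvd n k n ?_
    obtain ⟨z'', rfl⟩ := Multiset.exists_cons_of_mem hq
    have : p₀ * q ∣ g := ⟨z''.prod, by simp [← hprod, mul_assoc]⟩
    rw [← hG, sq]
    exact (mul_dvd_mul hΦp₀ hΦq).trans (Polynomial.map_mul ι ▸ Polynomial.map_dvd ι this)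
  have hsum : g.natDegree = p₀.natDegree + Multiset.card z' := by
    rw [← hprod, natDegree_multiset_prod_of_monic _ hmon, Multiset.map_cons,
      Multiset.sum_cons, Multiset.map_congr rfl hdeg', Multiset.map_const',
      Multiset.sum_replicate, smul_eq_mul, mul_one]
  have : g.natDegree = k + n + 2 := by
    rw [← natDegree_map_natCast, hG, ← pow_one Φ, natDegree_X_add_one_pow_mul]
  rw [Multiset.card_cons]
  omega

theorem lengthSet_eq {k n : ℕ} (hk : k ≠ 0) (hn : n ≠ 0) {g : ℕ[X]}
    (hg : g.map ι = (X + C (n : ℤ)) ^ n * Φ * (X + 1) ^ k) : LengthSet g = {k + 1, k + n} := by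
  obtain ⟨Q, hQ⟩ := (mem_lifts _).1 (X_add_C_self_pow_mul_mem_lifts hn)
  have hX1 : Irreducible (X + 1 : ℕ[X]) := by simpa using irreducible_X_add_C 1
  ext L
  simp only [LengthSet, monoidIrreducible_iff, Set.mem_ofPred_eq, Set.mem_insert_iff,
    Set.mem_singleton_iff]
  refine ⟨fun ⟨z, hz, hprod, hL⟩ => hL ▸ card_eq_of_prod_eq hg hz hprod, ?_⟩
  rintro (rfl | rfl)
  · refine ⟨Q ::ₘ Multiset.replicate k (X + 1), ?_, map_natCast_injective ?_, by simp⟩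
    · simp only [Multiset.mem_cons, Multiset.mem_replicate]
      rintro p (rfl | ⟨-, rfl⟩)
      exacts [irreducible_of_map_eq_X_add_C_self_pow_mul hQ, hX1]
    · simp [hg, hQ]
  · refine ⟨(X ^ 3 + 1) ::ₘ (Multiset.replicate n (X + C n) + Multiset.replicate (k - 1) (X + 1)),
      ?_, map_natCast_injective ?_, ?_⟩
    · simp only [Multiset.mem_cons, Multiset.mem_add, Multiset.mem_replicate]
      rintro p (rfl | ⟨-, rfl⟩ | ⟨-, rfl⟩)
      exacts [irreducible_X_pow_three_add_one, irreducible_X_add_C n, hX1]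
    · obtain ⟨k, rfl⟩ := Nat.exists_eq_succ_of_ne_zero hk
      simp only [Multiset.prod_cons, Multiset.prod_add, Multiset.prod_replicate, Polynomial.map_mul,
        Polynomial.map_add, Polynomial.map_pow, Polynomial.map_one, map_X, eq_natCast,
        Polynomial.map_natCast, map_natCast, Nat.succ_eq_add_one, add_tsub_cancel_right, hg]
      ring
    · simp only [Multiset.card_cons, Multiset.card_add, Multiset.card_replicate]
      omega

theorem exists_eq_add_div_add_one_of_one_lt {q : ℚ} (hq : 1 < q) :
    ∃ k n : ℕ, 1 ≤ k ∧ 2 ≤ n ∧ q = ((k : ℚ) + n) / ((k : ℚ) + 1) := by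
  obtain ⟨p, hp⟩ := Int.eq_ofNat_of_zero_le (Rat.num_pos.2 (by linarith)).le
  have hq' : q = p / q.den := by simpa [hp] using (Rat.num_div_den q).symm
  have hd : 0 < q.den := q.den_pos
  generalize q.den = d at hq' hd
  subst hq'
  have hdp : d < p := by
    rw [one_lt_div (by positivity)] at hq
    exact_mod_cast hq
  -- k + 1 = 2d and k + n = 2p; the doubling makes n ≥ 2 even when p = d + 1
  refine ⟨2 * d - 1, 2 * (p - d) + 1, by omega, by omega, ?_⟩
  push_cast [Nat.cast_sub (by omega : 1 ≤ 2 * d), Nat.cast_sub hdp.le]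
  field_simp
  ring

/-- `ℕ[x]*` has full and infinite elasticity. Concretely: for every `k ≥ 1` and
`n ≥ 2` there is `g ∈ ℕ[x]` equal (over `ℤ`) to `(x+n)^n (x^2-x+1)(x+1)^k`
whose set of factorization lengths is exactly `{k+1, k+n}`, so that
`ρ(g) = (k+n)/(k+1)`; and the set of such ratios is exactly the set of all
rationals `> 1`, whence every rational `q > 1` is an elasticity and the
elasticity of `ℕ[x]*` is infinite. -/
theorem natPolynomial_full_infinite_elasticity :
    (∀ k n : ℕ, 1 ≤ k → 2 ≤ n →
      ∃ g : Polynomial ℕ,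
        g.map (Nat.castRingHom ℤ)
          = (X + C (n : ℤ)) ^ n * (X ^ 2 - X + 1) * (X + 1) ^ k ∧
        LengthSet g = {k + 1, k + n}) ∧
    {q : ℚ | ∃ k n : ℕ, 1 ≤ k ∧ 2 ≤ n ∧ q = ((k : ℚ) + n) / ((k : ℚ) + 1)}
      = {q : ℚ | 1 < q} := by
  refine ⟨fun k n hk hn => ?_, Set.ext fun q => ⟨?_, exists_eq_add_div_add_one_of_one_lt⟩⟩
  · obtain ⟨Q, hQ⟩ := (mem_lifts _).1 (X_add_C_self_pow_mul_mem_lifts (n := n) (by omega))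
    have hg : (Q * (X + 1) ^ k).map ι = (X + C (n : ℤ)) ^ n * Φ * (X + 1) ^ k := by simp [hQ]
    exact ⟨_, hg, lengthSet_eq (by omega) (by omega) hg⟩
  · rintro ⟨k, n, hk, hn, rfl⟩
    rw [Set.mem_ofPred_eq, one_lt_div (by positivity)]
    exact_mod_cast (by omega : k + 1 < k + n)
end

section
/- Let M_p = ⟨p^{-n} p_n^{-1} : n ≥ 1⟩ be the additive submonoid of ℚ≥0 generated by the elements 1/(p^n p_n), where p is a fixed prime and (p_n) enumerates all primes different from p in increasing order. Then the set of atoms of M_p is exactly {p^{-n} p_n^{-1} : n ≥ 1}, and M_p is atomic. -/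
/-!
The prime `p_n` divides the denominator of the generator `1/(p^n p_n)` and of no other
generator, and rationals whose denominators avoid a prime are closed under addition. Hence
any representation of `1/(p^n p_n)` as a sum of generators uses `1/(p^n p_n)` itself, and
since all generators are positive the remaining summands vanish: every generator is an atom.
Conversely an atom, being a sum of generators, must be a single generator.
-/

/-- The `n`-th prime different from `p` (1-indexed, in increasing order). -/
noncomputable def primeAvoiding (p n : ℕ) : ℕ :=
  Nat.nth (fun q => Nat.Prime q ∧ q ≠ p) (n - 1)

/-- The additive submonoid `M_p = ⟨1/(p^n p_n) : n ≥ 1⟩` of `ℚ≥0`. -/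
noncomputable def Mp (p : ℕ) : AddSubmonoid ℚ :=
  AddSubmonoid.closure
    {q : ℚ | ∃ n : ℕ, 1 ≤ n ∧ q = 1 / ((p : ℚ) ^ n * (primeAvoiding p n : ℚ))}

/-- `a` is an atom of the additive monoid `M`. -/
def IsAtomOf (M : AddSubmonoid ℚ) (a : ℚ) : Prop :=
  a ∈ M ∧ a ≠ 0 ∧ ∀ b c : ℚ, b ∈ M → c ∈ M → a = b + c → b = 0 ∨ c = 0

section AtomsOfClosure

variable {S : Set ℚ}

theorem mem_of_isAtomOf_closure (hS : (0 : ℚ) ∉ S) {a : ℚ}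
    (ha : IsAtomOf (AddSubmonoid.closure S) a) : a ∈ S := by
  obtain ⟨hmem, hne, hsplit⟩ := ha
  obtain ⟨z, hzS, rfl⟩ := AddSubmonoid.exists_multiset_of_mem_closure hmem
  obtain ⟨e, he⟩ := Multiset.exists_mem_of_ne_zero
    (show z ≠ 0 by rintro rfl; exact hne Multiset.sum_zero)
  obtain ⟨rest, rfl⟩ := Multiset.exists_cons_of_mem he
  have hrest : rest.sum ∈ AddSubmonoid.closure S :=
    AddSubmonoid.multiset_sum_mem _ rest fun x hx =>
      AddSubmonoid.subset_closure (hzS x (Multiset.mem_cons_of_mem hx))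
  rcases hsplit e rest.sum (AddSubmonoid.subset_closure (hzS e he)) hrest
      (Multiset.sum_cons e rest) with he0 | hrest0
  · exact absurd (he0 ▸ hzS e he) hS
  · simpa [hrest0] using hzS e he

theorem nonneg_of_mem_closure (hS : ∀ s ∈ S, 0 < s) {x : ℚ}
    (hx : x ∈ AddSubmonoid.closure S) : 0 ≤ x := by
  obtain ⟨z, hzS, rfl⟩ := AddSubmonoid.exists_multiset_of_mem_closure hx
  exact Multiset.sum_nonneg fun e he => (hS e (hzS e he)).le

/-- The summand of `b + c = s` whose representation contains `s` is already `≥ s`,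
so the other summand is `0`. -/
theorem isAtomOf_closure_of_mem_of_sum_eq (hS : ∀ s ∈ S, 0 < s) {s : ℚ} (hs : s ∈ S)
    (hrepr : ∀ z : Multiset ℚ, (∀ e ∈ z, e ∈ S) → z.sum = s → s ∈ z) :
    IsAtomOf (AddSubmonoid.closure S) s := by
  refine ⟨AddSubmonoid.subset_closure hs, (hS s hs).ne', fun b c hb hc hsum => ?_⟩
  obtain ⟨zb, hzbS, rfl⟩ := AddSubmonoid.exists_multiset_of_mem_closure hb
  obtain ⟨zc, hzcS, rfl⟩ := AddSubmonoid.exists_multiset_of_mem_closure hc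
  have hsub (z : Multiset ℚ) (hzS : ∀ e ∈ z, e ∈ S) (hmem : s ∈ z) : s ≤ z.sum :=
    Multiset.single_le_sum (fun e he => (hS e (hzS e he)).le) s hmem
  have hb0 := nonneg_of_mem_closure hS hb
  have hc0 := nonneg_of_mem_closure hS hc
  rcases Multiset.mem_add.mp (hrepr (zb + zc)
      (fun e he => (Multiset.mem_add.mp he).elim (hzbS e) (hzcS e))
      (by rw [Multiset.sum_add, hsum])) with hmem | hmem
  · exact Or.inr (by linarith [hsub zb hzbS hmem])
  · exact Or.inl (by linarith [hsub zc hzcS hmem])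

theorem exists_multiset_isAtomOf_sum_eq
    (hS : ∀ s ∈ S, IsAtomOf (AddSubmonoid.closure S) s) {x : ℚ}
    (hx : x ∈ AddSubmonoid.closure S) :
    ∃ z : Multiset ℚ, (∀ a ∈ z, IsAtomOf (AddSubmonoid.closure S) a) ∧ z.sum = x := by
  obtain ⟨z, hzS, hsum⟩ := AddSubmonoid.exists_multiset_of_mem_closure hx
  exact ⟨z, fun a ha => hS a (hzS a ha), hsum⟩

end AtomsOfClosure

theorem Nat.Prime.not_dvd_den_multiset_sum {q : ℕ} (hq : q.Prime) {z : Multiset ℚ}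
    (hz : ∀ e ∈ z, ¬ q ∣ e.den) : ¬ q ∣ z.sum.den := by
  refine Multiset.sum_induction (fun x : ℚ => ¬ q ∣ x.den) z (fun a b ha hb hab => ?_)
    (by simpa using hq.one_lt.ne') hz
  rcases hq.dvd_mul.mp (hab.trans (Rat.add_den_dvd a b)) with h | h
  exacts [ha h, hb h]

section PrimeAvoiding

variable {p : ℕ}

theorem setOf_prime_ne_infinite (p : ℕ) : {q : ℕ | q.Prime ∧ q ≠ p}.Infinite :=
  Nat.infinite_setOfPred_prime.sdiff (Set.finite_singleton p)

theorem primeAvoiding_prime (p n : ℕ) : (primeAvoiding p n).Prime :=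
  (Nat.nth_mem_of_infinite (setOf_prime_ne_infinite p) (n - 1)).1

theorem primeAvoiding_ne (p n : ℕ) : primeAvoiding p n ≠ p :=
  (Nat.nth_mem_of_infinite (setOf_prime_ne_infinite p) (n - 1)).2

/-- The bounds are needed: `primeAvoiding p 0 = primeAvoiding p 1` since `0 - 1 = 0` in `ℕ`. -/
theorem primeAvoiding_inj {k n : ℕ} (hk : 1 ≤ k) (hn : 1 ≤ n) :
    primeAvoiding p k = primeAvoiding p n ↔ k = n := by
  refine ⟨fun h => ?_, fun h => h ▸ rfl⟩
  have := Nat.nth_injective (setOf_prime_ne_infinite p) h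
  omega

noncomputable def mpGenerator (p n : ℕ) : ℚ :=
  1 / ((p : ℚ) ^ n * (primeAvoiding p n : ℚ))

def mpGenerators (p : ℕ) : Set ℚ :=
  {q : ℚ | ∃ n : ℕ, 1 ≤ n ∧ q = mpGenerator p n}

theorem mpGenerator_pos (hp : 0 < p) (n : ℕ) : 0 < mpGenerator p n := by
  have : (0 : ℚ) < primeAvoiding p n := mod_cast (primeAvoiding_prime p n).pos
  unfold mpGenerator
  positivity

theorem mpGenerators_pos (hp : 0 < p) : ∀ s ∈ mpGenerators p, 0 < s := by
  rintro _ ⟨n, -, rfl⟩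
  exact mpGenerator_pos hp n

theorem mpGenerator_den (hp : 0 < p) (n : ℕ) :
    (mpGenerator p n).den = p ^ n * primeAvoiding p n := by
  rw [mpGenerator, one_div, ← Nat.cast_pow, ← Nat.cast_mul, Rat.inv_natCast_den_of_pos]
  exact Nat.mul_pos (Nat.pow_pos hp) (primeAvoiding_prime p n).pos

theorem primeAvoiding_dvd_den_mpGenerator_iff (hp : p.Prime) {k n : ℕ} (hk : 1 ≤ k)
    (hn : 1 ≤ n) : primeAvoiding p n ∣ (mpGenerator p k).den ↔ k = n := by
  have hq := primeAvoiding_prime p n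
  rw [mpGenerator_den hp.pos, hq.dvd_mul,
    Nat.prime_dvd_prime_iff_eq hq (primeAvoiding_prime p k), eq_comm, primeAvoiding_inj hk hn]
  refine or_iff_right fun h => primeAvoiding_ne p n ?_
  exact (Nat.prime_dvd_prime_iff_eq hq hp).mp (hq.dvd_of_dvd_pow h)

theorem mpGenerator_mem_of_sum_eq (hp : p.Prime) {n : ℕ} (hn : 1 ≤ n) {z : Multiset ℚ}
    (hz : ∀ e ∈ z, e ∈ mpGenerators p) (hsum : z.sum = mpGenerator p n) :
    mpGenerator p n ∈ z := by
  by_contra hnot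
  refine (primeAvoiding_prime p n).not_dvd_den_multiset_sum (z := z) (fun e he => ?_) ?_
  · obtain ⟨k, hk, rfl⟩ := hz e he
    rw [primeAvoiding_dvd_den_mpGenerator_iff hp hk hn]
    rintro rfl
    exact hnot he
  · rw [hsum, primeAvoiding_dvd_den_mpGenerator_iff hp hn hn]

theorem isAtomOf_mpGenerator (hp : p.Prime) {n : ℕ} (hn : 1 ≤ n) :
    IsAtomOf (Mp p) (mpGenerator p n) :=
  isAtomOf_closure_of_mem_of_sum_eq (mpGenerators_pos hp.pos) ⟨n, hn, rfl⟩
    fun _ hz hsum => mpGenerator_mem_of_sum_eq hp hn hz hsum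

end PrimeAvoiding

/-- For a prime `p`, the atoms of `M_p` are exactly the generators
`1/(p^n p_n)` with `n ≥ 1`, and `M_p` is atomic: every nonzero element is a
finite sum of atoms. -/
theorem Mp_atoms_and_atomic (p : ℕ) (hp : p.Prime) :
    ({a : ℚ | IsAtomOf (Mp p) a}
        = {q : ℚ | ∃ n : ℕ, 1 ≤ n ∧ q = 1 / ((p : ℚ) ^ n * (primeAvoiding p n : ℚ))}) ∧
    (∀ x : ℚ, x ∈ Mp p → x ≠ 0 →
      ∃ z : Multiset ℚ, (∀ a ∈ z, IsAtomOf (Mp p) a) ∧ z.sum = x) := by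
  have hzero : (0 : ℚ) ∉ mpGenerators p := fun h => (mpGenerators_pos hp.pos 0 h).false
  have hatoms : ∀ s ∈ mpGenerators p, IsAtomOf (Mp p) s := by
    rintro _ ⟨n, hn, rfl⟩
    exact isAtomOf_mpGenerator hp hn
  refine ⟨Set.ext fun a => ⟨mem_of_isAtomOf_closure hzero, hatoms a⟩, fun x hx _ => ?_⟩
  exact exists_multiset_isAtomOf_sum_eq hatoms hx
end
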